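/- With the same recurrence as above but coarsening factor c = 1/2 and f(κ, 1/2) = 2κ: N_ops(κ, n) = 2κ·C·N_n for all κ ≥ 1, n ≥ 1, where N_{ℓ+1} = 2·N_ℓ. -/
import Mathlib

theorem Nops_formula_half (C : ℝ) (hC : 0 < C)
    (Nvar : ℕ → ℝ) (Nops : ℕ → ℕ → ℝ)
    (hNvar : ∀ ℓ : ℕ, 1 ≤ ℓ → Nvar (ℓ + 1) = 2 * Nvar ℓ)
    (hbase : ∀ κ : ℕ, 1 ≤ κ → Nops κ 1 = 2 * κ * C * Nvar 1)
    (hrec1 : ∀ n : ℕ, 1 ≤ n → Nops 1 (n + 1) = C * Nvar (n + 1) + Nops 1 n)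
    (hrec : ∀ κ n : ℕ, 1 ≤ κ → 1 ≤ n →
      Nops (κ + 1) (n + 1) = C * Nvar (n + 1) + Nops (κ + 1) n + Nops κ n) :
    ∀ κ n : ℕ, 1 ≤ κ → 1 ≤ n → Nops κ n = 2 * κ * C * Nvar n := by
  have main : ∀ n : ℕ, 1 ≤ n → ∀ κ : ℕ, 1 ≤ κ → Nops κ n = 2 * κ * C * Nvar n := by
    intro n hn
    induction n, hn using Nat.le_induction with
    | base => exact hbase
    | succ n hn ih =>
      intro κ hκ
      match κ, hκ with
      | 1, _ =>
        rw [hrec1 n hn, ih 1 le_rfl, hNvar n hn]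
        push_cast
        ring
      | (m + 2), _ =>
        rw [hrec (m + 1) n (Nat.le_add_left 1 m) hn, ih (m + 2) (by omega),
          ih (m + 1) (by omega), hNvar n hn]
        push_cast
        ring
  exact fun κ n hκ hn => main n hn κ hκ
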